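/- If Z is injective, i.e. P(L_y ≤ 1) = 1 for each y ∈ 𝒵, then for every objective event F and every y with P_E(Z_S = y) > 0, P_E(F | Z_S = y) = P(F | G_y), where G_y = {L_y ≥ 1} is the objective event that some observer sees colour y. -/

import Mathlib

/-!
Under the Thirder measure, `P_E(F ∩ {Z_S = y}) = E[1_F L_y] / E|𝒳|`. Injectivity makes `L_y`
almost surely `{0, 1}`-valued, so `L_y = 1_{G_y}` almost surely and the numerator becomes
`P(F ∩ G_y) / E|𝒳|`; the normalising constant `1 / E|𝒳|` cancels in the conditional probability.
-/

open scoped Classical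
open Finset

noncomputable def pr {α : Type*} [Fintype α] (μ : α → ℝ) (A : Set α) : ℝ :=
  ∑ a : α, if a ∈ A then μ a else 0

noncomputable def cpr {α : Type*} [Fintype α] (μ : α → ℝ) (A B : Set α) : ℝ :=
  pr μ (A ∩ B) / pr μ B

noncomputable def ex {α : Type*} [Fintype α] (μ : α → ℝ) (f : α → ℝ) : ℝ :=
  ∑ a : α, μ a * f a

def IsProb {α : Type*} [Fintype α] (μ : α → ℝ) : Prop :=
  (∀ a, 0 ≤ μ a) ∧ ∑ a : α, μ a = 1

section Weights

variable {α : Type*} [Fintype α] {μ : α → ℝ}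

theorem pr_add_pr_compl (μ : α → ℝ) (A : Set α) : pr μ A + pr μ Aᶜ = ∑ a, μ a := by
  rw [pr, pr, ← Finset.sum_add_distrib]
  refine Finset.sum_congr rfl fun a _ => ?_
  by_cases ha : a ∈ A <;> simp [ha]

theorem IsProb.eq_zero_of_pr_eq_one (hμ : IsProb μ) {A : Set α} (hA : pr μ A = 1) {a : α}
    (ha : a ∉ A) : μ a = 0 := by
  have hcompl : pr μ Aᶜ = 0 := by linarith [pr_add_pr_compl μ A, hμ.2]
  rw [pr] at hcompl
  have := (Finset.sum_eq_zero_iff_of_nonneg fun b _ => ?_).1 hcompl a (Finset.mem_univ a)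
  · simpa [ha] using this
  · split_ifs <;> simp [hμ.1 b]

theorem IsProb.ex_indicator_eq_pr (hμ : IsProb μ) {f : α → ℕ} (hf : pr μ {a | f a ≤ 1} = 1)
    (G : Set α) : ex μ (G.indicator fun a => (f a : ℝ)) = pr μ (G ∩ {a | 1 ≤ f a}) := by
  refine Finset.sum_congr rfl fun a _ => ?_
  by_cases hfa : f a ≤ 1
  · by_cases hG : a ∈ G
    · rcases Nat.le_one_iff_eq_zero_or_eq_one.1 hfa with h | h <;> simp [hG, h]
    · simp [hG]
  · simp [hμ.eq_zero_of_pr_eq_one hf hfa]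

end Weights

/-- The event `{ω.2 = some x}` is "the sampled observer `S` is `x`", so the left side is
`P_E(G ∩ {Z_S = y})` and the right side is `c · E[1_G L_y]`. -/
theorem pr_inter_observes_eq {Ω₀ K 𝒵 : Type*} [Fintype Ω₀] [Fintype K] [DecidableEq K]
    (P0 : Ω₀ → ℝ) (𝒳 : Ω₀ → Finset K) (Z : Ω₀ → K → 𝒵) (c : ℝ) (PE : Ω₀ × Option K → ℝ)
    (hPE1 : ∀ (o : Ω₀) (x : K), PE (o, some x) = c * P0 o * (if x ∈ 𝒳 o then 1 else 0))
    (hPE2 : ∀ o : Ω₀, PE (o, none) = 0) (G : Set Ω₀) (y : 𝒵) :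
    pr PE ({ω | ω.1 ∈ G} ∩ {ω | ∃ x : K, ω.2 = some x ∧ x ∈ 𝒳 ω.1 ∧ Z ω.1 x = y}) =
      c * ex P0 (G.indicator fun o => (((𝒳 o).filter (fun x => Z o x = y)).card : ℝ)) := by
  rw [pr, ex, Fintype.sum_prod_type, Finset.mul_sum]
  refine Finset.sum_congr rfl fun o _ => ?_
  rw [Fintype.sum_option]
  by_cases hG : o ∈ G
  · have hsum : ∀ x : K, (if x ∈ 𝒳 o ∧ Z o x = y then PE (o, some x) else 0) =
        if x ∈ (𝒳 o).filter (fun x => Z o x = y) then c * P0 o else 0 := fun x => by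
      by_cases hx : x ∈ 𝒳 o <;> simp [hx, hPE1]
    simp only [Set.mem_inter_iff, Set.mem_ofPred_eq, hG, true_and, hPE2, Option.some.injEq,
      reduceCtorEq, false_and, exists_false, if_false, zero_add, exists_eq_left', hsum,
      Finset.sum_ite_mem, Finset.univ_inter, Finset.sum_const, nsmul_eq_mul, Set.indicator_of_mem]
    ring
  · simp [hG]

theorem stmt14_general {Ω₀ K 𝒵 : Type*} [Fintype Ω₀] [Fintype K] [DecidableEq K]
    (P0 : Ω₀ → ℝ) (𝒳 : Ω₀ → Finset K)
    (hP0 : IsProb P0)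
    (Z : Ω₀ → K → 𝒵)
    (L : 𝒵 → Ω₀ → ℕ)
    (hL : ∀ (y : 𝒵) (o : Ω₀), L y o = ((𝒳 o).filter (fun x => Z o x = y)).card)
    (hinj : ∀ y : 𝒵, pr P0 {o | L y o ≤ 1} = 1)
    (PE : Ω₀ × Option K → ℝ)
    (hPE1 : ∀ (o : Ω₀) (x : K),
      PE (o, some x) = (ex P0 (fun o' => ((𝒳 o').card : ℝ)))⁻¹ * P0 o *
        (if x ∈ 𝒳 o then 1 else 0))
    (hPE2 : ∀ o : Ω₀, PE (o, none) = 0) :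
    ∀ (F : Set Ω₀) (y : 𝒵),
      0 < pr PE {ω | ∃ x : K, ω.2 = some x ∧ x ∈ 𝒳 ω.1 ∧ Z ω.1 x = y} →
      cpr PE {ω | ω.1 ∈ F} {ω | ∃ x : K, ω.2 = some x ∧ x ∈ 𝒳 ω.1 ∧ Z ω.1 x = y}
        = cpr P0 F {o | 1 ≤ L y o} := by
  intro F y hpos
  set c := (ex P0 (fun o' => ((𝒳 o').card : ℝ)))⁻¹
  set Sy := {ω : Ω₀ × Option K | ∃ x : K, ω.2 = some x ∧ x ∈ 𝒳 ω.1 ∧ Z ω.1 x = y}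
  have hobs : ∀ G : Set Ω₀, pr PE ({ω | ω.1 ∈ G} ∩ Sy) = c * pr P0 (G ∩ {o | 1 ≤ L y o}) := by
    intro G
    rw [pr_inter_observes_eq P0 𝒳 Z c PE hPE1 hPE2, ← hP0.ex_indicator_eq_pr (hinj y)]
    simp only [hL]
  have hden : pr PE Sy = c * pr P0 {o | 1 ≤ L y o} := by
    simpa using hobs Set.univ
  have hc : c ≠ 0 := left_ne_zero_of_mul (hden ▸ hpos).ne'
  rw [cpr, cpr, hobs F, hden, mul_div_mul_left _ _ hc]

/-- If the auxiliary process `Z` is injective (`P(L_y ≤ 1) = 1` for each `y`)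
then conditioning `P_E` on the observer's observation `{Z_S = y}` agrees with
objectively conditioning on `G_y = {L_y ≥ 1}`:
`P_E(F | Z_S = y) = P(F | G_y)` for all objective `F`. -/
theorem stmt14 {Ω₀ K 𝒵 : Type*} [Fintype Ω₀] [Fintype K] [DecidableEq K] [Fintype 𝒵]
    (P0 : Ω₀ → ℝ) (𝒳 : Ω₀ → Finset K)
    (hP0 : IsProb P0)
    (hne : pr P0 {o | 𝒳 o = ∅} < 1)
    (Z : Ω₀ → K → 𝒵)
    (L : 𝒵 → Ω₀ → ℕ)
    (hL : ∀ (y : 𝒵) (o : Ω₀), L y o = ((𝒳 o).filter (fun x => Z o x = y)).card)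
    (hinj : ∀ y : 𝒵, pr P0 {o | L y o ≤ 1} = 1)
    (PE : Ω₀ × Option K → ℝ)
    (hPE1 : ∀ (o : Ω₀) (x : K),
      PE (o, some x) = (ex P0 (fun o' => ((𝒳 o').card : ℝ)))⁻¹ * P0 o *
        (if x ∈ 𝒳 o then 1 else 0))
    (hPE2 : ∀ o : Ω₀, PE (o, none) = 0) :
    ∀ (F : Set Ω₀) (y : 𝒵),
      0 < pr PE {ω | ∃ x : K, ω.2 = some x ∧ x ∈ 𝒳 ω.1 ∧ Z ω.1 x = y} →
      cpr PE {ω | ω.1 ∈ F} {ω | ∃ x : K, ω.2 = some x ∧ x ∈ 𝒳 ω.1 ∧ Z ω.1 x = y}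
        = cpr P0 F {o | 1 ≤ L y o} :=
  stmt14_general P0 𝒳 hP0 Z L hL hinj PE hPE1 hPE2
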